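/- Let i be a vertex of a graph G with eccentricity ε_i (the maximum distance from i to any vertex of G). Then the number of distinct poles of the rational function φ^{G\i}/φ^G (equivalently, the size of the eigenvalue support of i) is at least ε_i + 1. -/

import Mathlib

/-!
Write the adjacency matrix as `A = ∑ⱼ μⱼ uⱼ uⱼᵀ` with an orthonormal eigenbasis `uⱼ`. Then
`φ^{G∖i} = adj(X - A)ᵢᵢ = ∑ⱼ uⱼ(i)² ∏_{k ≠ j} (X - μₖ)`, so every eigenvalue `θ = μⱼ` with
`uⱼ(i) ≠ 0` (the eigenvalue support `S` of `i`) has smaller multiplicity in `φ^{G∖i}` than in `φ^G`,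
i.e. is a pole. On the other hand, if `|S| ≤ d = dist(i, v)`, the monic polynomial
`q = X^(d - |S|) ∏_{θ ∈ S} (X - θ)` of degree `d` satisfies `q(A)ᵢᵥ = ∑ⱼ uⱼ(i) uⱼ(v) q(μⱼ) = 0`;
but `(Aᵏ)ᵢᵥ` counts walks of length `k` from `i` to `v`, so `q(A)ᵢᵥ = (Aᵈ)ᵢᵥ > 0`.
-/

open Polynomial Matrix Finset

/-- Characteristic polynomial (over ℝ) of the adjacency matrix of the induced subgraph of `G`
obtained by deleting the vertices in `S`. -/
noncomputable def phiDel {V : Type*} [Fintype V] [DecidableEq V]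
    (G : SimpleGraph V) [DecidableRel G.Adj] (S : Finset V) : Polynomial ℝ :=
  ((G.adjMatrix ℝ).submatrix (Subtype.val : {v // v ∉ S} → V) Subtype.val).charpoly

theorem Finset.prod_erase_eq_prod_erase_of_apply_eq {ι M : Type*} [CommMonoidWithZero M]
    [IsLeftCancelMulZero M] [DecidableEq ι] {s : Finset ι} {f : ι → M} {a b : ι} (ha : a ∈ s)
    (hb : b ∈ s) (hab : f a = f b) (hf : f a ≠ 0) : ∏ k ∈ s.erase a, f k = ∏ k ∈ s.erase b, f k :=
  mul_left_cancel₀ hf <| (mul_prod_erase s f ha).trans (hab ▸ mul_prod_erase s f hb).symm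

namespace Polynomial

variable {K ι : Type*} [Field K]

theorem rootMultiplicity_prod_X_sub_C [DecidableEq K] (s : Finset ι) (μ : ι → K) (θ : K) :
    rootMultiplicity θ (∏ k ∈ s, (X - C (μ k))) = #{k ∈ s | μ k = θ} := by
  have hroots := roots_multiset_prod_X_sub_C (s.val.map μ)
  rw [Multiset.map_map, Function.comp_def] at hroots
  rw [← count_roots, prod_eq_multiset_prod, hroots, Multiset.count_map, ← card_val, filter_val]
  simp only [eq_comm]

/- The terms with `μ j = θ` all equal `C (w j) * Ψ`, where `Ψ` has multiplicity `m - 1` at `θ`;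
all other terms are divisible by `(X - C θ) ^ m`. -/
theorem rootMultiplicity_sum_mul_prod_erase_lt [LinearOrder K] [IsStrictOrderedRing K]
    [Fintype ι] [DecidableEq ι] (μ w : ι → K) {θ : K} (hw : ∀ j, 0 ≤ w j) {j₀ : ι}
    (hj₀ : μ j₀ = θ) (hw₀ : 0 < w j₀) :
    rootMultiplicity θ (∑ j, C (w j) * ∏ k ∈ univ.erase j, (X - C (μ k))) <
      #{j | μ j = θ} := by
  set m := #{j | μ j = θ}
  set Ψ := ∏ k ∈ univ.erase j₀, (X - C (μ k))
  set s := ∑ j ∈ {j | μ j = θ}, w j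
  have hj₀m : j₀ ∈ ({j | μ j = θ} : Finset ι) := by simpa using hj₀
  have hm : 0 < m := card_pos.mpr ⟨j₀, hj₀m⟩
  have hΨ : rootMultiplicity θ Ψ = m - 1 := by
    rw [rootMultiplicity_prod_X_sub_C, filter_erase, card_erase_of_mem hj₀m]
  have hfar (j : ι) (hj : μ j ≠ θ) : (X - C θ) ^ m ∣ ∏ k ∈ univ.erase j, (X - C (μ k)) := by
    have hdvd := pow_rootMultiplicity_dvd (∏ k ∈ univ.erase j, (X - C (μ k))) θ
    rwa [rootMultiplicity_prod_X_sub_C, filter_erase,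
      erase_eq_of_notMem (by simpa using hj)] at hdvd
  have hsplit : ∑ j, C (w j) * ∏ k ∈ univ.erase j, (X - C (μ k)) =
      C s * Ψ + ∑ j ∈ {j | μ j ≠ θ}, C (w j) * ∏ k ∈ univ.erase j, (X - C (μ k)) := by
    rw [← sum_filter_add_sum_filter_not univ (μ · = θ), map_sum, sum_mul]
    refine congrArg (· + _) (sum_congr rfl fun j hj => ?_)
    rw [prod_erase_eq_prod_erase_of_apply_eq (mem_univ j) (mem_univ j₀)
      (by rw [(mem_filter.mp hj).2, hj₀]) (X_sub_C_ne_zero _)]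
  have hs : 0 < s := sum_pos' (fun j _ => hw j) ⟨j₀, hj₀m, hw₀⟩
  have hΨs : C s * Ψ ≠ 0 := mul_ne_zero (C_ne_zero.mpr hs.ne')
    (monic_prod_of_monic _ _ fun k _ => monic_X_sub_C _).ne_zero
  by_contra! hle
  have hdvd : (X - C θ) ^ m ∣ C s * Ψ := by
    have hdvd := (pow_dvd_pow _ hle).trans (pow_rootMultiplicity_dvd _ θ)
    rw [hsplit] at hdvd
    exact (dvd_add_left (dvd_sum fun j hj =>
      dvd_mul_of_dvd_right (hfar j (mem_filter.mp hj).2) _)).mp hdvd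
  have hle' := (le_rootMultiplicity_iff hΨs).mpr hdvd
  rw [rootMultiplicity_mul hΨs, rootMultiplicity_C, zero_add, hΨ] at hle'
  omega

theorem finite_setOf_rootMultiplicity_lt {p : K[X]} (hp : p ≠ 0) (q : K[X]) :
    {θ | rootMultiplicity θ q < rootMultiplicity θ p}.Finite :=
  (finite_setOfPred_isRoot hp).subset fun _ hθ =>
    (rootMultiplicity_pos hp).mp ((Nat.zero_le _).trans_lt hθ)

end Polynomial

namespace Matrix

section

variable {R n : Type*} [CommRing R] [Fintype n] [DecidableEq n] {P Q : Matrix n n R}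

theorem adjugate_mul_mul_of_mul_eq_one (h : P * Q = 1) (M : Matrix n n R) :
    adjugate (P * M * Q) = P * adjugate M * Q := by
  have h' : Q * P = 1 := mul_eq_one_comm.mp h
  have hP : adjugate P = P.det • Q := by
    rw [← mul_one (adjugate P), ← h, ← mul_assoc, adjugate_mul, smul_mul_assoc, one_mul]
  have hQ : adjugate Q = Q.det • P := by
    rw [← mul_one (adjugate Q), ← h', ← mul_assoc, adjugate_mul, smul_mul_assoc, one_mul]
  have hdet : Q.det * P.det = 1 := by rw [← det_mul, h', det_one]
  rw [adjugate_mul_distrib, adjugate_mul_distrib, hP, hQ]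
  simp only [smul_mul_assoc, mul_smul_comm, smul_smul, mul_assoc]
  rw [mul_comm, hdet, one_smul]

theorem charmatrix_mul_mul_of_mul_eq_one (h : P * Q = 1) (M : Matrix n n R) :
    charmatrix (P * M * Q) = P.map C * charmatrix M * Q.map C := by
  have hC : P.map C * Q.map C = 1 := by
    rw [← Matrix.map_mul, h, Matrix.map_one _ (map_zero C) (map_one C)]
  simp only [charmatrix, RingHom.mapMatrix_apply, Matrix.map_mul, mul_sub, sub_mul]
  congr 1
  rw [mul_assoc (P.map C), (scalar_commute (X : R[X]) (fun _ => Commute.all _ _) (Q.map C)).eq,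
    ← mul_assoc, hC, one_mul]

theorem aeval_mul_mul_of_mul_eq_one (h : P * Q = 1) (M : Matrix n n R) (p : R[X]) :
    aeval (P * M * Q) p = P * aeval M p * Q := by
  let u : (Matrix n n R)ˣ := ⟨P, Q, h, mul_eq_one_comm.mp h⟩
  have hpow (k : ℕ) : (P * M * Q) ^ k = P * M ^ k * Q := Units.conj_pow u M k
  simp only [aeval_eq_sum_range, hpow, Finset.mul_sum, Finset.sum_mul, mul_smul_comm,
    smul_mul_assoc]

theorem charmatrix_submatrix {m : Type*} [Fintype m] [DecidableEq m] {f : m → n}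
    (hf : Function.Injective f) (M : Matrix n n R) :
    charmatrix (M.submatrix f f) = (charmatrix M).submatrix f f := by
  ext a b
  simp [charmatrix_apply, diagonal_apply, hf.eq_iff]

/- After replacing row `i` by `Pi.single i 1` (which gives `adjugate M i i`), the matrix is block
triangular for the splitting `{i}`, complement of `{i}`. -/
theorem adjugate_apply_self (M : Matrix n n R) (i : n) :
    adjugate M i i =
      (M.submatrix (Subtype.val : {j // j ∉ ({i} : Finset n)} → n) Subtype.val).det := by
  set N := M.updateRow i (Pi.single i 1)
  have hrow : ∀ r, ¬ r ∉ ({i} : Finset n) → ∀ c, c ∉ ({i} : Finset n) → N r c = 0 := by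
    intro r hr c hc
    rw [not_not, mem_singleton] at hr
    rw [mem_singleton] at hc
    simp [N, hr, hc]
  have hcorner : N.toSquareBlockProp (fun j => ¬ j ∉ ({i} : Finset n)) = 1 := by
    ext ⟨a, ha⟩ ⟨b, hb⟩
    rw [not_not, mem_singleton] at ha hb
    subst ha hb
    simp [N, toSquareBlockProp_def]
  rw [adjugate_apply, twoBlockTriangular_det N _ hrow, hcorner, det_one, mul_one]
  congr 1
  ext ⟨a, ha⟩ ⟨b, hb⟩
  simp [N, toSquareBlockProp_def, updateRow_ne (show a ≠ i by simpa using ha)]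

end

theorem mul_diagonal_mul_apply {n α : Type*} [Fintype n] [DecidableEq n]
    [NonUnitalNonAssocSemiring α] (P Q : Matrix n n α) (d : n → α) (x y : n) :
    (P * diagonal d * Q) x y = ∑ j, P x j * d j * Q j y := by
  simp only [mul_apply (M := P * diagonal d), mul_diagonal]

namespace IsHermitian

variable {n : Type*} [Fintype n] [DecidableEq n] {A : Matrix n n ℝ} (hA : A.IsHermitian)

local notation "U" => (hA.eigenvectorUnitary : Matrix n n ℝ)

theorem eigenvectorUnitary_mul_transpose : U * Uᵀ = 1 := by
  simpa [star_eq_conjTranspose] using Unitary.coe_mul_star_self hA.eigenvectorUnitary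

theorem eq_eigenvectorUnitary_mul_diagonal_mul_transpose :
    A = U * diagonal hA.eigenvalues * Uᵀ := by
  conv_lhs => rw [hA.spectral_theorem, Unitary.conjStarAlgAut_apply]
  simp [star_eq_conjTranspose]

theorem adjugate_charmatrix_apply_self (i : n) :
    Matrix.adjugate (charmatrix A) i i =
      ∑ j, C (U i j ^ 2) * ∏ k ∈ univ.erase j, (X - C (hA.eigenvalues k)) := by
  have hU := hA.eigenvectorUnitary_mul_transpose
  have hUC : Matrix.map U C * Matrix.map Uᵀ C = 1 := by
    rw [← Matrix.map_mul, hU, Matrix.map_one _ (map_zero C) (map_one C)]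
  conv_lhs => rw [hA.eq_eigenvectorUnitary_mul_diagonal_mul_transpose,
    charmatrix_mul_mul_of_mul_eq_one hU, adjugate_mul_mul_of_mul_eq_one hUC,
    charmatrix_diagonal, adjugate_diagonal, mul_diagonal_mul_apply]
  simp only [map_apply, transpose_apply, C_pow]
  exact sum_congr rfl fun j _ => by ring

theorem aeval_apply (p : ℝ[X]) (x y : n) :
    aeval A p x y = ∑ j, U x j * U y j * p.eval (hA.eigenvalues j) := by
  have hdiag : aeval (diagonal hA.eigenvalues) p =
      diagonal fun j => p.eval (hA.eigenvalues j) := by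
    rw [← diagonalAlgHom_apply (R := ℝ), aeval_algHom_apply, diagonalAlgHom_apply, aeval_pi_apply]
    rfl
  conv_lhs => rw [hA.eq_eigenvectorUnitary_mul_diagonal_mul_transpose,
    aeval_mul_mul_of_mul_eq_one hA.eigenvectorUnitary_mul_transpose, hdiag,
    mul_diagonal_mul_apply]
  exact sum_congr rfl fun j _ => by rw [transpose_apply]; ring

/-- The eigenvalue support `{θ | E_θ eᵢ ≠ 0}` of `i`: since `E_θ = ∑_{μⱼ = θ} uⱼ uⱼᵀ` with
orthonormal `uⱼ`, it consists of the `μⱼ` with `uⱼ(i) ≠ 0`. -/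
noncomputable def eigenvalueSupport (i : n) : Finset ℝ :=
  ({j | U i j ≠ 0} : Finset n).image hA.eigenvalues

theorem rootMultiplicity_adjugate_charmatrix_lt {i : n} {θ : ℝ}
    (hθ : θ ∈ hA.eigenvalueSupport i) :
    rootMultiplicity θ (Matrix.adjugate (charmatrix A) i i) < rootMultiplicity θ A.charpoly := by
  obtain ⟨j, hj, rfl⟩ := mem_image.mp hθ
  rw [hA.adjugate_charmatrix_apply_self, hA.charpoly_eq, rootMultiplicity_prod_X_sub_C]
  exact rootMultiplicity_sum_mul_prod_erase_lt _ _ (fun _ => sq_nonneg _) rfl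
    (sq_pos_of_ne_zero (mem_filter.mp hj).2)

theorem card_eigenvalueSupport_le_ncard (i : n) :
    #(hA.eigenvalueSupport i) ≤ {θ | rootMultiplicity θ (Matrix.adjugate (charmatrix A) i i) <
      rootMultiplicity θ A.charpoly}.ncard := by
  rw [← Set.ncard_coe_finset]
  exact Set.ncard_le_ncard (fun _ hθ => hA.rootMultiplicity_adjugate_charmatrix_lt hθ)
    (finite_setOf_rootMultiplicity_lt (charpoly_monic A).ne_zero _)

theorem aeval_apply_eq_zero_of_isRoot {p : ℝ[X]} {i : n}
    (hp : ∀ θ ∈ hA.eigenvalueSupport i, p.IsRoot θ) (v : n) : aeval A p i v = 0 := by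
  rw [hA.aeval_apply]
  refine sum_eq_zero fun j _ => ?_
  by_cases hj : U i j = 0
  · rw [hj, zero_mul, zero_mul]
  · rw [(hp _ (mem_image_of_mem _ (mem_filter.mpr ⟨mem_univ j, hj⟩))).eq_zero, mul_zero]

end IsHermitian

end Matrix

namespace SimpleGraph

variable {V R : Type*} [Fintype V] [DecidableEq V] (G : SimpleGraph V) [DecidableRel G.Adj]
  {u v : V}

theorem adjMatrix_pow_apply_eq_zero_of_lt_dist [Semiring R] {k : ℕ} (hk : k < G.dist u v) :
    (G.adjMatrix R ^ k) u v = 0 := by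
  rw [adjMatrix_pow_apply_eq_card_walk,
    Fintype.card_eq_zero_iff.mpr ⟨fun ⟨p, hp⟩ => (G.dist_le p).not_gt (hp ▸ hk)⟩, Nat.cast_zero]

theorem adjMatrix_pow_dist_apply_ne_zero [Semiring R] [CharZero R] (h : G.Reachable u v) :
    (G.adjMatrix R ^ G.dist u v) u v ≠ 0 := by
  obtain ⟨p, hp⟩ := h.exists_walk_length_eq_dist
  rw [adjMatrix_pow_apply_eq_card_walk, Nat.cast_ne_zero, ← Nat.pos_iff_ne_zero,
    Fintype.card_pos_iff]
  exact ⟨⟨p, hp⟩⟩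

theorem aeval_adjMatrix_apply_ne_zero [CommSemiring R] [CharZero R] (h : G.Reachable u v)
    {q : R[X]} (hq : q.Monic) (hdeg : q.natDegree = G.dist u v) :
    aeval (G.adjMatrix R) q u v ≠ 0 := by
  rw [aeval_eq_sum_range, Matrix.sum_apply, sum_range_succ, Matrix.smul_apply,
    hq.coeff_natDegree, one_smul, sum_eq_zero fun k hk => ?_, zero_add, hdeg]
  · exact G.adjMatrix_pow_dist_apply_ne_zero h
  · rw [Matrix.smul_apply, G.adjMatrix_pow_apply_eq_zero_of_lt_dist (hdeg ▸ mem_range.mp hk),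
      smul_zero]

theorem dist_add_one_le_card_eigenvalueSupport (h : G.Reachable u v) :
    G.dist u v + 1 ≤ #((G.isHermitian_adjMatrix ℝ).eigenvalueSupport u) := by
  set S := (G.isHermitian_adjMatrix ℝ).eigenvalueSupport u
  by_contra! hS
  have hprod : (∏ θ ∈ S, (X - C θ)).Monic := monic_prod_of_monic _ _ fun θ _ => monic_X_sub_C θ
  set q := (∏ θ ∈ S, (X - C θ)) * X ^ (G.dist u v - #S)
  have hq : q.Monic := hprod.mul (monic_X_pow _)
  have hdeg : q.natDegree = G.dist u v := by
    rw [hprod.natDegree_mul (monic_X_pow _),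
      natDegree_prod_of_monic _ _ fun θ _ => monic_X_sub_C θ]
    simp only [natDegree_X_sub_C, sum_const, smul_eq_mul, mul_one, natDegree_X_pow]
    omega
  refine G.aeval_adjMatrix_apply_ne_zero h hq hdeg
    ((G.isHermitian_adjMatrix ℝ).aeval_apply_eq_zero_of_isRoot (fun θ hθ => ?_) v)
  rw [IsRoot.def, eval_mul, eval_prod, prod_eq_zero hθ (by simp), zero_mul]

end SimpleGraph

section

variable {V : Type*} [Fintype V] [DecidableEq V] (G : SimpleGraph V) [DecidableRel G.Adj]

theorem phiDel_empty : phiDel G ∅ = (G.adjMatrix ℝ).charpoly := by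
  rw [phiDel, ← charpoly_reindex (Equiv.subtypeUnivEquiv fun v => notMem_empty v)]
  rfl

theorem phiDel_singleton (i : V) :
    phiDel G {i} = adjugate (charmatrix (G.adjMatrix ℝ)) i i := by
  rw [phiDel, Matrix.charpoly, adjugate_apply_self, charmatrix_submatrix Subtype.val_injective]

end

/-- The number of distinct poles of `φ^{G∖i}/φ^G` is at least the eccentricity of `i`
plus one: for every vertex `v`, `dist i v + 1` is at most the number of poles. -/
theorem card_poles_ge_eccentricity_add_one
    {V : Type*} [Fintype V] [DecidableEq V]
    (G : SimpleGraph V) [DecidableRel G.Adj] (hconn : G.Connected) (i : V) :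
    ∀ v : V, G.dist i v + 1 ≤
      {θ : ℝ | Polynomial.rootMultiplicity θ (phiDel G {i}) <
        Polynomial.rootMultiplicity θ (phiDel G ∅)}.ncard := by
  intro v
  rw [phiDel_singleton, phiDel_empty]
  exact (G.dist_add_one_le_card_eigenvalueSupport (hconn.preconnected i v)).trans
    ((G.isHermitian_adjMatrix ℝ).card_eigenvalueSupport_le_ncard i)
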